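/- arXiv:2011.14955 — 5 statements merged into one kernel-verified Lean document; each statement's English description precedes it below -/
import Mathlib

section
/- Let 0 < r < n be integers. The hypersimplex Δ(n,r) has exactly C(n,r) exposed faces that are single points (vertices), and for each integer 1 ≤ d ≤ n−1, the number of exposed faces of Δ(n,r) whose affine span has dimension d equals C(n, d+1) · Σ_{k = r−d}^{r−1} C(n−d−1, k), where C(m,k) denotes the binomial coefficient (equal to 0 when k < 0 or k > m). -/
open Finset

/-- The hypersimplex `Δ(n,r) = {x ∈ [0,1]^n : Σ x_i = r}`. -/
def hypersimplex (n r : ℕ) : Set (Fin n → ℝ) :=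
  {x | (∀ i, 0 ≤ x i ∧ x i ≤ 1) ∧ ∑ i, x i = (r : ℝ)}

/-- `F` is a (nonempty) exposed face of `K`: it is the set of maximizers over `K` of
some linear functional. -/
def IsExposedFaceOf {n : ℕ} (K F : Set (Fin n → ℝ)) : Prop :=
  F.Nonempty ∧ ∃ ℓ : (Fin n → ℝ) →ₗ[ℝ] ℝ, F = {x ∈ K | ∀ y ∈ K, ℓ y ≤ ℓ x}

noncomputable section HSAux

namespace HSAux

variable {n r : ℕ}

/-- indicator vector of a finset -/
def ind (S : Finset (Fin n)) : Fin n → ℝ := fun i => if i ∈ S then 1 else 0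

lemma ind_inj : Function.Injective (ind (n := n)) := by
  intro S T h
  ext i
  have := congrFun h i
  simp only [ind] at this
  by_cases hS : i ∈ S <;> by_cases hT : i ∈ T <;> simp [hS, hT] at this <;> tauto

lemma sum_ind (S : Finset (Fin n)) : ∑ i, ind S i = S.card := by
  simp [ind, Finset.sum_ite_mem]

lemma ind_mem_hs {S : Finset (Fin n)} (h : S.card = r) : ind S ∈ hypersimplex n r := by
  refine ⟨fun i => ?_, by rw [sum_ind, h]⟩
  unfold ind; split <;> norm_num

lemma ind_insert {S : Finset (Fin n)} {i : Fin n} (hi : i ∉ S) :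
    ind (insert i S) = ind S + Pi.single i 1 := by
  funext j
  simp only [ind, Finset.mem_insert, Pi.add_apply, Pi.single_apply]
  by_cases hji : j = i
  · subst hji; simp [hi]
  · simp [hji]

/-- The face of the hypersimplex given by fixing coordinates in `A` to one and
coordinates outside `A ∪ B` to zero. -/
def face (r : ℕ) (A B : Finset (Fin n)) : Set (Fin n → ℝ) :=
  {x | x ∈ hypersimplex n r ∧ (∀ i ∈ A, x i = 1) ∧ ∀ i, i ∉ A → i ∉ B → x i = 0}

lemma ind_mem_face {A B B' : Finset (Fin n)} (hAB : Disjoint A B) (hB' : B' ⊆ B)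
    (hcard : A.card + B'.card = r) : ind (A ∪ B') ∈ face r A B := by
  have hd : Disjoint A B' := hAB.mono_right hB'
  refine ⟨ind_mem_hs (by rw [Finset.card_union_of_disjoint hd, hcard]), ?_, ?_⟩
  · intro i hi; simp [ind, Finset.mem_union, hi]
  · intro i hiA hiB
    have : i ∉ A ∪ B' := by
      simp only [Finset.mem_union]
      rintro (h | h) <;> [exact hiA h; exact hiB (hB' h)]
    simp [ind, this]

lemma sum_eq_card_forall_one {S : Finset (Fin n)} {x : Fin n → ℝ}
    (hle : ∀ i ∈ S, x i ≤ 1) (hsum : ∑ i ∈ S, x i = S.card) : ∀ i ∈ S, x i = 1 := by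
  have h0 : ∑ i ∈ S, (1 - x i) = 0 := by
    rw [Finset.sum_sub_distrib, hsum, Finset.sum_const, nsmul_eq_mul, mul_one, sub_self]
  intro i hi
  have := (Finset.sum_eq_zero_iff_of_nonneg (fun i hi => by linarith [hle i hi])).1 h0 i hi
  linarith

lemma face_sum_A {A B : Finset (Fin n)} {x : Fin n → ℝ} (hx : x ∈ face r A B) :
    ∑ i ∈ A, x i = A.card := by
  rw [Finset.sum_congr rfl (fun i hi => hx.2.1 i hi)]
  simp

lemma face_sum_AB {A B : Finset (Fin n)} {x : Fin n → ℝ} (hx : x ∈ face r A B) :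
    ∑ i ∈ A ∪ B, x i = r := by
  rw [← hx.1.2]
  refine Finset.sum_subset (Finset.subset_univ _) fun i _ hi => ?_
  simp only [Finset.mem_union, not_or] at hi
  exact hx.2.2 i hi.1 hi.2

lemma hs_sum_le_card {S : Finset (Fin n)} {y : Fin n → ℝ} (hy : y ∈ hypersimplex n r) :
    ∑ i ∈ S, y i ≤ S.card := by
  calc ∑ i ∈ S, y i ≤ ∑ _i ∈ S, (1:ℝ) := Finset.sum_le_sum fun i _ => (hy.1 i).2
  _ = S.card := by simp

lemma hs_sum_le_r {S : Finset (Fin n)} {y : Fin n → ℝ} (hy : y ∈ hypersimplex n r) :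
    ∑ i ∈ S, y i ≤ r := by
  rw [← hy.2]
  exact Finset.sum_le_sum_of_subset_of_nonneg (Finset.subset_univ _)
    fun i _ _ => (hy.1 i).1

/-- linear functional given by a coefficient vector -/
def dot (c : Fin n → ℝ) : (Fin n → ℝ) →ₗ[ℝ] ℝ where
  toFun x := ∑ i, c i * x i
  map_add' x y := by simp [mul_add, Finset.sum_add_distrib]
  map_smul' m x := by
    simp only [Pi.smul_apply, smul_eq_mul, RingHom.id_apply, Finset.mul_sum]
    exact Finset.sum_congr rfl fun i _ => by ring

lemma dot_apply (c x : Fin n → ℝ) : dot c x = ∑ i, c i * x i := rfl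

lemma dot_ind_add (S T : Finset (Fin n)) (x : Fin n → ℝ) :
    dot (fun i => ind S i + ind T i) x = (∑ i ∈ S, x i) + (∑ i ∈ T, x i) := by
  simp only [dot_apply, ind, add_mul, ite_mul, one_mul, zero_mul,
    Finset.sum_add_distrib, Finset.sum_ite_mem, Finset.univ_inter]

/-- Every `face r A B` with the obvious nonemptiness condition is an exposed face. -/
lemma face_exposed {A B : Finset (Fin n)} (hAB : Disjoint A B) (h1 : A.card ≤ r)
    (h2 : r ≤ A.card + B.card) : IsExposedFaceOf (hypersimplex n r) (face r A B) := by
  obtain ⟨B', hB'B, hB'card⟩ := Finset.exists_subset_card_eq (show r - A.card ≤ B.card by omega)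
  have hmem : ind (A ∪ B') ∈ face r A B := ind_mem_face hAB hB'B (by omega)
  refine ⟨⟨_, hmem⟩, dot (fun i => ind A i + ind (A ∪ B) i), ?_⟩
  ext x
  constructor
  · rintro ⟨hxK, hx1, hx0⟩
    refine ⟨hxK, fun y hy => ?_⟩
    rw [dot_ind_add, dot_ind_add, face_sum_A ⟨hxK, hx1, hx0⟩, face_sum_AB ⟨hxK, hx1, hx0⟩]
    have := hs_sum_le_card (S := A) hy
    have := hs_sum_le_r (S := A ∪ B) hy
    linarith
  · rintro ⟨hxK, hmax⟩
    have hz := hmax _ hmem.1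
    rw [dot_ind_add, dot_ind_add, face_sum_A hmem, face_sum_AB hmem] at hz
    have e1 : ∑ i ∈ A, x i ≤ A.card := hs_sum_le_card hxK
    have e2 : ∑ i ∈ A ∪ B, x i ≤ r := hs_sum_le_r hxK
    have eqA : ∑ i ∈ A, x i = A.card := by linarith
    have eqAB : ∑ i ∈ A ∪ B, x i = r := by linarith
    refine ⟨hxK, sum_eq_card_forall_one (fun i _ => (hxK.1 i).2) eqA, ?_⟩
    intro i hiA hiB
    have hsum0 : ∑ i ∈ (A ∪ B)ᶜ, x i = 0 := by
      have := Finset.sum_add_sum_compl (A ∪ B) x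
      rw [eqAB, hxK.2] at this
      linarith
    refine (Finset.sum_eq_zero_iff_of_nonneg fun j _ => (hxK.1 j).1).1 hsum0 i ?_
    simp [Finset.mem_compl, Finset.mem_union, hiA, hiB]


lemma sum_ite_mem_univ (A : Finset (Fin n)) (f : Fin n → ℝ) :
    ∑ i, (if i ∈ A then f i else 0) = ∑ i ∈ A, f i := by
  rw [Finset.sum_ite_mem, Finset.univ_inter]

/-- Every exposed face of the hypersimplex is of the form `face r A B`. -/
lemma exposed_eq_face {F : Set (Fin n → ℝ)} (hr : 0 < r) (hrn : r < n)
    (hF : IsExposedFaceOf (hypersimplex n r) F) :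
    ∃ A B : Finset (Fin n), Disjoint A B ∧ A.card < r ∧ r ≤ A.card + B.card ∧
      F = face r A B := by
  obtain ⟨hne, ℓ, hFeq⟩ := hF
  set c : Fin n → ℝ := fun i => ℓ (fun j => if i = j then 1 else 0) with hc
  have hℓ : ∀ x, ℓ x = ∑ i, c i * x i := by
    intro x
    rw [LinearMap.pi_apply_eq_sum_univ]
    exact Finset.sum_congr rfl fun i _ => by rw [smul_eq_mul, mul_comm]
  set σ := Tuple.sort c with hσ
  have hmono := Tuple.monotone_sort c
  set m : Fin n := ⟨n - r, by omega⟩ with hm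
  set t : ℝ := c (σ m) with ht
  set A : Finset (Fin n) := Finset.univ.filter (fun i => t < c i) with hA
  set B : Finset (Fin n) := Finset.univ.filter (fun i => c i = t) with hB
  have hmemA : ∀ i, i ∈ A ↔ t < c i := by intro i; simp [hA]
  have hmemB : ∀ i, i ∈ B ↔ c i = t := by intro i; simp [hB]
  have hAB : Disjoint A B := by
    rw [Finset.disjoint_left]
    intro a ha hb
    exact absurd ((hmemB a).1 hb) (ne_of_gt ((hmemA a).1 ha))
  have hcardA : A.card < r := by
    have hle : A.card ≤ (Finset.Ioi m).card := by
      refine Finset.card_le_card_of_injOn (fun i => σ.symm i) (fun i hi => ?_)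
        (fun a _ b _ hab => σ.symm.injective hab)
      rw [Finset.mem_coe, Finset.mem_Ioi]
      by_contra hcon
      push_neg at hcon
      have : c (σ (σ.symm i)) ≤ c (σ m) := hmono hcon
      rw [Equiv.apply_symm_apply] at this
      exact absurd ((hmemA i).1 hi) (not_lt.2 this)
    rw [Fin.card_Ioi] at hle
    have : (m : ℕ) = n - r := rfl
    omega
  have hcardAB : r ≤ A.card + B.card := by
    have hle : (Finset.Ici m).card ≤ (A ∪ B).card := by
      refine Finset.card_le_card_of_injOn (fun j => σ j) (fun j hj => ?_)
        (fun a _ b _ hab => σ.injective hab)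
      rw [Finset.mem_coe, Finset.mem_Ici] at hj
      have : c (σ m) ≤ c (σ j) := hmono hj
      rcases lt_or_eq_of_le this with h | h
      · exact Finset.mem_union_left _ ((hmemA _).2 h)
      · exact Finset.mem_union_right _ ((hmemB _).2 h.symm)
    rw [Fin.card_Ici] at hle
    have hcu : (A ∪ B).card = A.card + B.card := Finset.card_union_of_disjoint hAB
    have : (m : ℕ) = n - r := rfl
    omega
  -- pointwise bound
  have hpt : ∀ y ∈ hypersimplex n r, ∀ i,
      (c i - t) * y i ≤ (if i ∈ A then c i - t else 0) := by
    intro y hy i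
    by_cases hiA : i ∈ A
    · simp only [hiA, if_true]
      have h1 : t < c i := (hmemA i).1 hiA
      nlinarith [(hy.1 i).2, (hy.1 i).1]
    · simp only [hiA, if_false]
      have h1 : c i ≤ t := by
        have := (hmemA i).not.1 hiA
        push_neg at this
        exact this
      nlinarith [(hy.1 i).1]
  have hbound : ∀ y ∈ hypersimplex n r,
      ∑ i, (c i - t) * y i ≤ ∑ i ∈ A, (c i - t) := by
    intro y hy
    rw [← sum_ite_mem_univ A (fun i => c i - t)]
    exact Finset.sum_le_sum fun i _ => hpt y hy i
  have hfaceval : ∀ x ∈ face r A B, ∑ i, (c i - t) * x i = ∑ i ∈ A, (c i - t) := by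
    intro x hx
    rw [← sum_ite_mem_univ A (fun i => c i - t)]
    refine Finset.sum_congr rfl fun i _ => ?_
    by_cases hiA : i ∈ A
    · simp [hiA, hx.2.1 i hiA]
    · by_cases hiB : i ∈ B
      · have hct : c i = t := (hmemB i).1 hiB
        simp [hiA, hct]
      · simp [hiA, hx.2.2 i hiA hiB]
  have hval : ∀ y ∈ hypersimplex n r, ℓ y = (∑ i, (c i - t) * y i) + t * r := by
    intro y hy
    rw [hℓ]
    have hexp : ∑ i, (c i - t) * y i = (∑ i, c i * y i) - t * ∑ i, y i := by
      rw [Finset.mul_sum, ← Finset.sum_sub_distrib]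
      exact Finset.sum_congr rfl fun i _ => by ring
    rw [hexp, hy.2]
    ring
  obtain ⟨B', hB'B, hB'card⟩ := Finset.exists_subset_card_eq
    (show r - A.card ≤ B.card by omega)
  have hz : ind (A ∪ B') ∈ face r A B := ind_mem_face hAB hB'B (by omega)
  refine ⟨A, B, hAB, hcardA, hcardAB, ?_⟩
  rw [hFeq]
  ext x
  constructor
  · rintro ⟨hxK, hmax⟩
    have hzineq := hmax _ hz.1
    rw [hval _ hz.1, hval _ hxK] at hzineq
    have h1 : ∑ i, (c i - t) * x i = ∑ i, (if i ∈ A then c i - t else 0) := by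
      rw [sum_ite_mem_univ A (fun i => c i - t)]
      have := hbound x hxK
      have := hfaceval _ hz
      linarith
    have heach := (Finset.sum_eq_sum_iff_of_le (fun i _ => hpt x hxK i)).1 h1
    refine ⟨hxK, fun i hiA => ?_, fun i hiA hiB => ?_⟩
    · have := heach i (Finset.mem_univ i)
      simp only [hiA, if_true] at this
      have hpos : c i - t > 0 := sub_pos.2 ((hmemA i).1 hiA)
      have : (c i - t) * x i = (c i - t) * 1 := by rw [this]; ring
      exact mul_left_cancel₀ (ne_of_gt hpos) this
    · have := heach i (Finset.mem_univ i)
      simp only [hiA, if_false] at this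
      have hlt : c i < t := by
        have h1 := (hmemA i).not.1 hiA
        have h2 := (hmemB i).not.1 hiB
        push_neg at h1
        exact lt_of_le_of_ne h1 h2
      rcases mul_eq_zero.1 this with h | h
      · exact absurd h (by intro hcon; linarith [sub_eq_zero.1 hcon])
      · exact h
  · intro hx
    refine ⟨hx.1, fun y hy => ?_⟩
    rw [hval y hy, hval x hx.1, hfaceval x hx]
    linarith [hbound y hy]


lemma face_eq_singleton_of_card_eq {A B : Finset (Fin n)} (hAB : Disjoint A B)
    (h : A.card + B.card = r) : face r A B = {ind (A ∪ B)} := by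
  ext x
  constructor
  · intro hx
    have hcast : (r : ℝ) = (A.card : ℝ) + (B.card : ℝ) := by exact_mod_cast h.symm
    have hsumB : ∑ i ∈ B, x i = B.card := by
      have h1 := face_sum_AB hx
      have h2 := face_sum_A hx
      rw [Finset.sum_union hAB] at h1
      linarith
    have hB1 := sum_eq_card_forall_one (fun i _ => (hx.1.1 i).2) hsumB
    have hx' : x = ind (A ∪ B) := by
      funext i
      by_cases hiA : i ∈ A
      · rw [hx.2.1 i hiA]; simp [ind, hiA]
      · by_cases hiB : i ∈ B
        · rw [hB1 i hiB]; simp [ind, hiB]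
        · rw [hx.2.2 i hiA hiB]
          simp [ind, hiA, hiB]
    exact hx'
  · intro hx
    rw [Set.mem_singleton_iff] at hx
    subst hx
    exact ind_mem_face hAB (subset_refl B) h

lemma face_eq_singleton_of_card_A {A B : Finset (Fin n)} (hAB : Disjoint A B)
    (h : A.card = r) : face r A B = {ind A} := by
  ext x
  constructor
  · intro hx
    have hcast : (r : ℝ) = (A.card : ℝ) := by exact_mod_cast h.symm
    have hsum0 : ∑ i ∈ Aᶜ, x i = 0 := by
      have h1 := Finset.sum_add_sum_compl A x
      rw [hx.1.2] at h1
      have h2 := face_sum_A hx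
      linarith
    have hz := (Finset.sum_eq_zero_iff_of_nonneg fun j _ => (hx.1.1 j).1).1 hsum0
    have hx' : x = ind A := by
      funext i
      by_cases hiA : i ∈ A
      · rw [hx.2.1 i hiA]; simp [ind, hiA]
      · rw [hz i (Finset.mem_compl.2 hiA)]; simp [ind, hiA]
    exact hx'
  · intro hx
    rw [Set.mem_singleton_iff] at hx
    subst hx
    exact ⟨ind_mem_hs h, fun i hi => by simp [ind, hi],
      fun i hiA _ => by simp [ind, hiA]⟩

lemma face_mem_one_iff {A B : Finset (Fin n)} (hAB : Disjoint A B) (hlt : A.card < r)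
    (hgt : r < A.card + B.card) (i : Fin n) :
    (∀ x ∈ face r A B, x i = 1) ↔ i ∈ A := by
  constructor
  · intro h
    by_contra hiA
    by_cases hiB : i ∈ B
    · obtain ⟨B', hB'sub, hB'card⟩ := Finset.exists_subset_card_eq
        (show r - A.card ≤ (B.erase i).card by
          rw [Finset.card_erase_of_mem hiB]; omega)
      have hface := ind_mem_face (r := r) hAB (hB'sub.trans (Finset.erase_subset _ _)) (by omega)
      have h1 := h _ hface
      have hi' : i ∉ A ∪ B' := by
        simp only [Finset.mem_union, not_or]
        exact ⟨hiA, fun hc => Finset.notMem_erase i B (hB'sub hc)⟩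
      simp [ind, hi'] at h1
    · obtain ⟨B', hB'B, hB'card⟩ := Finset.exists_subset_card_eq
        (show r - A.card ≤ B.card by omega)
      have hface := ind_mem_face (r := r) hAB hB'B (by omega)
      have h1 := h _ hface
      have hi' : i ∉ A ∪ B' := by
        simp only [Finset.mem_union, not_or]
        exact ⟨hiA, fun hc => hiB (hB'B hc)⟩
      simp [ind, hi'] at h1
  · intro hiA x hx
    exact hx.2.1 i hiA

lemma face_mem_zero_iff {A B : Finset (Fin n)} (hAB : Disjoint A B) (hlt : A.card < r)
    (hgt : r < A.card + B.card) (i : Fin n) :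
    (∀ x ∈ face r A B, x i = 0) ↔ (i ∉ A ∧ i ∉ B) := by
  constructor
  · intro h
    constructor
    · intro hiA
      obtain ⟨B', hB'B, hB'card⟩ := Finset.exists_subset_card_eq
        (show r - A.card ≤ B.card by omega)
      have hface := ind_mem_face (r := r) hAB hB'B (by omega)
      have h1 := h _ hface
      have hi' : i ∈ A ∪ B' := Finset.mem_union_left _ hiA
      simp [ind, hi'] at h1
    · intro hiB
      obtain ⟨B'', hsub, hcard⟩ := Finset.exists_subset_card_eq
        (show r - A.card - 1 ≤ (B.erase i).card by
          rw [Finset.card_erase_of_mem hiB]; omega)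
      have hiB'' : i ∉ B'' := fun hc => Finset.notMem_erase i B (hsub hc)
      have hB' : insert i B'' ⊆ B :=
        Finset.insert_subset hiB (hsub.trans (Finset.erase_subset _ _))
      have hface := ind_mem_face (r := r) hAB hB'
        (by rw [Finset.card_insert_of_notMem hiB'']; omega)
      have h1 := h _ hface
      have hi' : i ∈ A ∪ insert i B'' := by simp
      simp [ind, hi'] at h1
  · intro hi x hx
    exact hx.2.2 i hi.1 hi.2

lemma face_inj {A B A' B' : Finset (Fin n)} (hAB : Disjoint A B) (hlt : A.card < r)
    (hgt : r < A.card + B.card) (hAB' : Disjoint A' B') (hlt' : A'.card < r)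
    (hgt' : r < A'.card + B'.card) (h : face r A B = face r A' B') :
    A = A' ∧ B = B' := by
  have hA : A = A' := by
    ext i
    rw [← face_mem_one_iff hAB hlt hgt i, h, face_mem_one_iff hAB' hlt' hgt' i]
  refine ⟨hA, ?_⟩
  ext i
  have h1 := face_mem_zero_iff hAB hlt hgt i
  have h2 := face_mem_zero_iff hAB' hlt' hgt' i
  rw [h, h2] at h1
  have d1 : i ∈ A → i ∉ B := fun hc => Finset.disjoint_left.1 hAB hc
  have d2 : i ∈ A' → i ∉ B' := fun hc => Finset.disjoint_left.1 hAB' hc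
  have hAiff : i ∈ A ↔ i ∈ A' := by rw [hA]
  tauto

lemma decomp {B : Finset (Fin n)} {b0 : Fin n} (hb0 : b0 ∈ B) {v : Fin n → ℝ}
    (hv0 : ∀ i, i ∉ B → v i = 0) (hsum : ∑ i, v i = 0) :
    v = ∑ i ∈ B.erase b0, v i • (Pi.single i (1:ℝ) - Pi.single b0 1) := by
  have hBsum : ∑ i ∈ B, v i = 0 := by
    rw [← hsum]
    exact Finset.sum_subset (Finset.subset_univ _) fun i _ hi => hv0 i hi
  have herase : ∑ i ∈ B.erase b0, v i = - v b0 := by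
    have := Finset.add_sum_erase B v hb0
    rw [hBsum] at this
    linarith
  funext j
  rw [Finset.sum_apply]
  simp only [Pi.smul_apply, Pi.sub_apply, Pi.single_apply, smul_eq_mul]
  by_cases hj : j = b0
  · subst hj
    have hcongr : ∀ i ∈ B.erase j, v i * ((if j = i then (1:ℝ) else 0) - if j = j then 1 else 0)
        = - v i := by
      intro i hi
      have : j ≠ i := fun hc => (Finset.mem_erase.1 hi).1 hc.symm
      simp [this]
    rw [Finset.sum_congr rfl hcongr, Finset.sum_neg_distrib, herase, neg_neg]
  · have hcongr : ∀ i ∈ B.erase b0, v i * ((if j = i then (1:ℝ) else 0) - if j = b0 then 1 else 0)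
        = if i = j then v i else 0 := by
      intro i hi
      by_cases hij : i = j
      · subst hij; simp [hj]
      · have : j ≠ i := fun hc => hij hc.symm
        simp [this, hj, hij]
    rw [Finset.sum_congr rfl hcongr, Finset.sum_ite_eq' (B.erase b0) j v]
    by_cases hjB : j ∈ B
    · rw [if_pos (Finset.mem_erase.2 ⟨hj, hjB⟩)]
    · rw [if_neg (fun hc => hjB (Finset.mem_of_mem_erase hc)), hv0 j hjB]

lemma face_dim {A B : Finset (Fin n)} (hAB : Disjoint A B) (hlt : A.card < r)
    (hgt : r < A.card + B.card) :
    Module.finrank ℝ (affineSpan ℝ (face r A B)).direction = B.card - 1 := by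
  have hB2 : 2 ≤ B.card := by omega
  obtain ⟨b0, hb0⟩ := Finset.card_pos.1 (show 0 < B.card by omega)
  set f : {i // i ∈ B.erase b0} → (Fin n → ℝ) :=
    fun i => Pi.single i.1 (1:ℝ) - Pi.single b0 1 with hf
  have hfmem : ∀ i : {i // i ∈ B.erase b0}, f i ∈ vectorSpan ℝ (face r A B) := by
    rintro ⟨i, hi⟩
    have hiB : i ∈ B := Finset.mem_of_mem_erase hi
    have hib0 : i ≠ b0 := (Finset.mem_erase.1 hi).1
    obtain ⟨B'', hsub, hcard⟩ := Finset.exists_subset_card_eq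
      (show r - A.card - 1 ≤ ((B.erase b0).erase i).card by
        rw [Finset.card_erase_of_mem (Finset.mem_erase.2 ⟨hib0, hiB⟩),
          Finset.card_erase_of_mem hb0]
        omega)
    have hiB'' : i ∉ B'' := fun hc => Finset.notMem_erase i _ (hsub hc)
    have hb0B'' : b0 ∉ B'' := fun hc =>
      Finset.notMem_erase b0 B (Finset.mem_of_mem_erase (hsub hc))
    have hsubB : B'' ⊆ B := hsub.trans
      ((Finset.erase_subset _ _).trans (Finset.erase_subset _ _))
    have hx : ind (A ∪ insert i B'') ∈ face r A B :=
      ind_mem_face hAB (Finset.insert_subset hiB hsubB)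
        (by rw [Finset.card_insert_of_notMem hiB'']; omega)
    have hy : ind (A ∪ insert b0 B'') ∈ face r A B :=
      ind_mem_face hAB (Finset.insert_subset hb0 hsubB)
        (by rw [Finset.card_insert_of_notMem hb0B'']; omega)
    have hiA : i ∉ A := Finset.disjoint_right.1 hAB hiB
    have hb0A : b0 ∉ A := Finset.disjoint_right.1 hAB hb0
    have h1 : i ∉ A ∪ B'' := by simp [hiA, hiB'']
    have h2 : b0 ∉ A ∪ B'' := by simp [hb0A, hb0B'']
    have key : ind (A ∪ insert i B'') - ind (A ∪ insert b0 B'') = f ⟨i, hi⟩ := by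
      rw [Finset.union_insert, Finset.union_insert, ind_insert h1, ind_insert h2]
      simp only [hf]
      abel
    have hmem := vsub_mem_vectorSpan ℝ hx hy
    rwa [vsub_eq_sub, key] at hmem
  have hspan : vectorSpan ℝ (face r A B) = Submodule.span ℝ (Set.range f) := by
    apply le_antisymm
    · rw [vectorSpan_def, Submodule.span_le]
      rintro v ⟨x, hx, y, hy, rfl⟩
      have hv0 : ∀ i, i ∉ B → (x - y) i = 0 := by
        intro i hiB
        by_cases hiA : i ∈ A
        · simp [Pi.sub_apply, hx.2.1 i hiA, hy.2.1 i hiA]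
        · simp [Pi.sub_apply, hx.2.2 i hiA hiB, hy.2.2 i hiA hiB]
      have hvsum : ∑ i, (x - y) i = 0 := by
        simp only [Pi.sub_apply]
        rw [Finset.sum_sub_distrib, hx.1.2, hy.1.2, sub_self]
      show x - y ∈ Submodule.span ℝ (Set.range f)
      rw [decomp hb0 hv0 hvsum]
      refine Submodule.sum_mem _ fun i hi => ?_
      exact Submodule.smul_mem _ _ (Submodule.subset_span ⟨⟨i, hi⟩, rfl⟩)
    · rw [Submodule.span_le]
      rintro v ⟨i, rfl⟩
      exact hfmem i
  have hli : LinearIndependent ℝ f := by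
    rw [linearIndependent_iff']
    intro s g hsg i hi
    have hcf := congrFun hsg i.1
    rw [Finset.sum_apply] at hcf
    have hib0 : (i : Fin n) ≠ b0 := (Finset.mem_erase.1 i.2).1
    simp only [hf, Pi.smul_apply, Pi.sub_apply, Pi.single_apply, smul_eq_mul,
      hib0, if_false, sub_zero, Pi.zero_apply] at hcf
    have hcongr : ∀ j ∈ s, g j * (if (i : Fin n) = (j : Fin n) then (1:ℝ) else 0)
        = if j = i then g j else 0 := by
      intro j _
      by_cases hij : j = i
      · subst hij; simp
      · have : (i : Fin n) ≠ (j : Fin n) := fun hc => hij (Subtype.ext hc.symm)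
        simp [this, hij]
    rw [Finset.sum_congr rfl hcongr, Finset.sum_ite_eq' s i g, if_pos hi] at hcf
    exact hcf
  rw [direction_affineSpan, hspan, finrank_span_eq_card hli]
  rw [Fintype.card_coe, Finset.card_erase_of_mem hb0]

end HSAux

end HSAux

open HSAux in
/-- Face count of the hypersimplex: `Δ(n,r)` has exactly `C(n,r)` exposed faces that are
singletons (vertices), and for `1 ≤ d ≤ n−1` the number of exposed faces whose affine
span has dimension `d` is `C(n,d+1) · Σ_{k=r−d}^{r−1} C(n−d−1,k)`. -/
theorem hypersimplex_face_count (n r : ℕ) (hr : 0 < r) (hrn : r < n) :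
    {F : Set (Fin n → ℝ) | IsExposedFaceOf (hypersimplex n r) F ∧ ∃ x, F = {x}}.ncard
      = n.choose r ∧
    ∀ d : ℕ, 1 ≤ d → d ≤ n - 1 →
      {F : Set (Fin n → ℝ) | IsExposedFaceOf (hypersimplex n r) F ∧
        Module.finrank ℝ (affineSpan ℝ F).direction = d}.ncard
      = n.choose (d + 1) * ∑ k ∈ Finset.Icc (r - d) (r - 1), (n - d - 1).choose k := by
  constructor
  · -- vertices
    have hset : {F : Set (Fin n → ℝ) | IsExposedFaceOf (hypersimplex n r) F ∧ ∃ x, F = {x}}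
        = (fun S : Finset (Fin n) => ({ind S} : Set (Fin n → ℝ))) ''
          ((Finset.univ.powersetCard r : Finset (Finset (Fin n))) :
            Set (Finset (Fin n))) := by
      ext F
      constructor
      · rintro ⟨hexp, x, rfl⟩
        obtain ⟨A, B, hAB, hlt, hle, hFeq⟩ := exposed_eq_face hr hrn hexp
        rcases eq_or_lt_of_le hle with heq | hlt2
        · refine ⟨A ∪ B, ?_, ?_⟩
          · rw [Finset.mem_coe, Finset.mem_powersetCard]
            exact ⟨Finset.subset_univ _, by rw [Finset.card_union_of_disjoint hAB]; omega⟩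
          · rw [hFeq, face_eq_singleton_of_card_eq hAB heq.symm]
        · exfalso
          obtain ⟨b', hb'⟩ := Finset.card_pos.1 (show 0 < B.card by omega)
          obtain ⟨B1, hB1sub, hB1card⟩ := Finset.exists_subset_card_eq
            (show r - A.card ≤ (B.erase b').card by
              rw [Finset.card_erase_of_mem hb']; omega)
          obtain ⟨b, hbB1⟩ := Finset.card_pos.1 (show 0 < B1.card by omega)
          have hb'B1 : b' ∉ B1 := fun hc => Finset.notMem_erase b' B (hB1sub hc)
          have hB2sub : insert b' (B1.erase b) ⊆ B :=
            Finset.insert_subset hb'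
              ((Finset.erase_subset _ _).trans
                (hB1sub.trans (Finset.erase_subset _ _)))
          have hB2card : (insert b' (B1.erase b)).card = r - A.card := by
            rw [Finset.card_insert_of_notMem
                (fun hc => hb'B1 (Finset.mem_of_mem_erase hc)),
              Finset.card_erase_of_mem hbB1]
            omega
          have h1 := ind_mem_face (r := r) hAB
            (hB1sub.trans (Finset.erase_subset _ _)) (by omega)
          have h2 := ind_mem_face (r := r) hAB hB2sub (by omega)
          rw [← hFeq] at h1 h2
          have he : ind (A ∪ B1) = ind (A ∪ insert b' (B1.erase b)) := by
            rw [Set.mem_singleton_iff.1 h1, Set.mem_singleton_iff.1 h2]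
          have hu := ind_inj he
          have hb'A : b' ∉ A := fun hc => Finset.disjoint_left.1 hAB hc hb'
          have hmem2 : b' ∈ A ∪ insert b' (B1.erase b) := by simp
          rw [← hu] at hmem2
          simp only [Finset.mem_union, Finset.mem_insert] at hmem2
          tauto
      · rintro ⟨S, hS, rfl⟩
        have hScard : S.card = r := (Finset.mem_powersetCard.1 (Finset.mem_coe.1 hS)).2
        have hface : face r S ∅ = {ind S} :=
          face_eq_singleton_of_card_A (Finset.disjoint_empty_right S) hScard
        refine ⟨?_, ind S, rfl⟩
        show IsExposedFaceOf (hypersimplex n r) {ind S}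
        rw [← hface]
        exact face_exposed (Finset.disjoint_empty_right S) (le_of_eq hScard)
          (by rw [Finset.card_empty]; omega)
    rw [hset, Set.ncard_image_of_injOn
      (fun S _ T _ h => ind_inj (Set.singleton_eq_singleton_iff.1 h)),
      Set.ncard_coe_finset, Finset.card_powersetCard, Finset.card_univ, Fintype.card_fin]
  · intro d hd1 hdn
    set P := (Finset.univ.powersetCard (d+1)).sigma
      (fun B : Finset (Fin n) =>
        (Finset.Icc (r - d) (r - 1)).biUnion (fun k => Bᶜ.powersetCard k)) with hP
    have hmemP : ∀ B A : Finset (Fin n),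
        (⟨B, A⟩ : (_ : Finset (Fin n)) × Finset (Fin n)) ∈ P ↔
          (B.card = d + 1 ∧ Disjoint A B ∧ A.card < r ∧ r ≤ A.card + d) := by
      intro B A
      rw [hP, Finset.mem_sigma, Finset.mem_powersetCard, Finset.mem_biUnion]
      constructor
      · rintro ⟨⟨-, hcard⟩, k, hk, hsub⟩
        rw [Finset.mem_powersetCard] at hsub
        rw [Finset.mem_Icc] at hk
        have hAk : A.card = k := hsub.2
        have hsub1 : A ⊆ Bᶜ := hsub.1
        have hdisj : Disjoint A B := by
          rw [Finset.disjoint_left]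
          intro a ha hap
          exact Finset.mem_compl.1 (hsub1 ha) hap
        exact ⟨hcard, hdisj, by omega, by omega⟩
      · rintro ⟨hcard, hdisj, hlt, hge⟩
        refine ⟨⟨Finset.subset_univ _, hcard⟩, A.card, ?_, ?_⟩
        · rw [Finset.mem_Icc]; omega
        · rw [Finset.mem_powersetCard]
          exact ⟨fun i hi => Finset.mem_compl.2 (Finset.disjoint_left.1 hdisj hi), rfl⟩
    have hset2 : {F : Set (Fin n → ℝ) | IsExposedFaceOf (hypersimplex n r) F ∧
          Module.finrank ℝ (affineSpan ℝ F).direction = d}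
        = (fun p : (_ : Finset (Fin n)) × Finset (Fin n) => face r p.2 p.1) '' ↑P := by
      ext F
      constructor
      · rintro ⟨hexp, hdim⟩
        obtain ⟨A, B, hAB, hlt, hle, rfl⟩ := exposed_eq_face hr hrn hexp
        rcases eq_or_lt_of_le hle with heq | hlt2
        · exfalso
          rw [face_eq_singleton_of_card_eq hAB heq.symm, direction_affineSpan,
            vectorSpan_singleton, finrank_bot] at hdim
          omega
        · have hbd := face_dim hAB hlt hlt2
          rw [hdim] at hbd
          have hBcard : B.card = d + 1 := by omega
          refine ⟨⟨B, A⟩, ?_, rfl⟩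
          rw [Finset.mem_coe, hmemP B A]
          exact ⟨hBcard, hAB, hlt, by omega⟩
      · rintro ⟨⟨B, A⟩, hp, rfl⟩
        rw [Finset.mem_coe, hmemP B A] at hp
        obtain ⟨hBcard, hAB, hlt, hge⟩ := hp
        have hlt2 : r < A.card + B.card := by omega
        show IsExposedFaceOf (hypersimplex n r) (face r A B) ∧
          Module.finrank ℝ (affineSpan ℝ (face r A B)).direction = d
        refine ⟨face_exposed hAB (by omega) (by omega), ?_⟩
        rw [face_dim hAB hlt hlt2, hBcard]
        omega
    have hinj : Set.InjOn
        (fun p : (_ : Finset (Fin n)) × Finset (Fin n) => face r p.2 p.1) ↑P := by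
      rintro ⟨B, A⟩ hp ⟨B', A'⟩ hp' h
      rw [Finset.mem_coe, hmemP B A] at hp
      rw [Finset.mem_coe, hmemP B' A'] at hp'
      obtain ⟨h1, h2, h3, h4⟩ := hp
      obtain ⟨h1', h2', h3', h4'⟩ := hp'
      obtain ⟨hA, hB⟩ := face_inj h2 h3 (by omega) h2' h3' (by omega) h
      subst hA; subst hB; rfl
    rw [hset2, Set.ncard_image_of_injOn hinj, Set.ncard_coe_finset, hP, Finset.card_sigma]
    have hinner : ∀ B ∈ (Finset.univ : Finset (Fin n)).powersetCard (d+1),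
        ((Finset.Icc (r - d) (r - 1)).biUnion fun k => Bᶜ.powersetCard k).card
          = ∑ k ∈ Finset.Icc (r - d) (r - 1), (n - d - 1).choose k := by
      intro B hB
      have hBcard : B.card = d + 1 := (Finset.mem_powersetCard.1 hB).2
      rw [Finset.card_biUnion]
      · refine Finset.sum_congr rfl fun k _ => ?_
        rw [Finset.card_powersetCard, Finset.card_compl, Fintype.card_fin, hBcard,
          show n - (d + 1) = n - d - 1 from by omega]
      · intro k1 _ k2 _ hne
        rw [Function.onFun, Finset.disjoint_left]
        intro a ha1 ha2
        rw [Finset.mem_powersetCard] at ha1 ha2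
        exact hne (ha1.2.symm.trans ha2.2)
    rw [Finset.sum_congr rfl hinner, Finset.sum_const, Finset.card_powersetCard,
      Finset.card_univ, Fintype.card_fin, smul_eq_mul]
end

section
/- Let n ≥ 2 and c ∈ [n]. The Minkowski sum over all i ∈ [n] ∖ {c} of the line segments from e_i to e_c in ℝ^n (where e_1,…,e_n are the standard basis vectors) equals the set {x ∈ ℝ^n : x_1 + ⋯ + x_n = n−1 and 0 ≤ x_j ≤ 1 for all j ≠ c}. -/
open Finset

/-- The Minkowski sum of the segments `[e_i, e_c]` for `i ≠ c` (the graphical zonotope of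
the star graph with center `c`) equals
`{x ∈ ℝ^n : Σ x_i = n−1 and 0 ≤ x_j ≤ 1 for all j ≠ c}`. -/
theorem star_zonotope_eq (n : ℕ) (hn : 2 ≤ n) (c : Fin n) :
    {x : Fin n → ℝ | ∃ p : Fin n → Fin n → ℝ,
        (∀ i, i ≠ c →
          p i ∈ segment ℝ (Pi.single i 1 : Fin n → ℝ) (Pi.single c 1 : Fin n → ℝ)) ∧
        x = ∑ i ∈ Finset.univ.erase c, p i} =
    {x : Fin n → ℝ | ∑ i, x i = (n : ℝ) - 1 ∧ ∀ j, j ≠ c → 0 ≤ x j ∧ x j ≤ 1} := by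
  have hcard : (Finset.univ.erase c).card = n - 1 := by
    rw [Finset.card_erase_of_mem (Finset.mem_univ c), Finset.card_univ, Fintype.card_fin]
  ext x
  simp only [Set.mem_setOf_eq]
  constructor
  · rintro ⟨p, hp, rfl⟩
    have hp' : ∀ i, ∃ t : ℝ, t ∈ Set.Icc (0:ℝ) 1 ∧ (i ≠ c →
        (1 - t) • (Pi.single i 1 : Fin n → ℝ) + t • (Pi.single c 1 : Fin n → ℝ) = p i) := by
      intro i
      by_cases hi : i = c
      · exact ⟨0, ⟨le_refl _, zero_le_one⟩, fun h => absurd hi h⟩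
      · have := hp i hi
        rw [segment_eq_image] at this
        obtain ⟨t, ht, hteq⟩ := this
        exact ⟨t, ht, fun _ => hteq⟩
    choose t ht hpt using hp'
    have hpij : ∀ i ∈ Finset.univ.erase c, ∀ j,
        p i j = (1 - t i) * (if i = j then 1 else 0) + t i * (if c = j then 1 else 0) := by
      intro i hi j
      have hi' := Finset.ne_of_mem_erase hi
      rw [← hpt i hi']
      simp only [Pi.add_apply, Pi.smul_apply, Pi.single_apply, smul_eq_mul, mul_ite, mul_one,
        mul_zero]
      congr 1 <;> simp [eq_comm]
    have hcoord : ∀ j, (∑ i ∈ Finset.univ.erase c, p i) j = ∑ i ∈ Finset.univ.erase c, p i j :=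
      fun j => Finset.sum_apply j _ _
    constructor
    · have : ∑ j, (∑ i ∈ Finset.univ.erase c, p i) j
          = ∑ i ∈ Finset.univ.erase c, ∑ j, p i j := by
        simp only [hcoord]
        exact Finset.sum_comm
      rw [this]
      have h1 : ∀ i ∈ Finset.univ.erase c, ∑ j, p i j = 1 := by
        intro i hi
        rw [Finset.sum_congr rfl fun j _ => hpij i hi j]
        rw [Finset.sum_add_distrib, ← Finset.mul_sum, ← Finset.mul_sum]
        simp
      rw [Finset.sum_congr rfl h1, Finset.sum_const, hcard]
      have h1n : 1 ≤ n := by omega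
      rw [nsmul_eq_mul, Nat.cast_sub h1n]
      push_cast; ring
    · intro j hj
      rw [hcoord j, Finset.sum_eq_single j]
      · have hj' : j ∈ Finset.univ.erase c := Finset.mem_erase.2 ⟨hj, Finset.mem_univ j⟩
        rw [hpij j hj' j]
        have h0 := (ht j).1
        have h1 := (ht j).2
        rw [if_pos rfl, if_neg (fun h : c = j => hj h.symm)]
        constructor <;> nlinarith
      · intro i hi hij
        rw [hpij i hi j, if_neg hij, if_neg (fun h : c = j => hj h.symm)]
        ring
      · intro h
        exact absurd (Finset.mem_erase.2 ⟨hj, Finset.mem_univ j⟩) h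
  · rintro ⟨hsum, hbd⟩
    refine ⟨fun i => x i • (Pi.single i 1 : Fin n → ℝ) + (1 - x i) • (Pi.single c 1 : Fin n → ℝ), ?_, ?_⟩
    · intro i hi
      exact ⟨x i, 1 - x i, (hbd i hi).1, by linarith [(hbd i hi).2], by ring, rfl⟩
    · funext j
      rw [Finset.sum_apply]
      have hterm : ∀ i, (x i • (Pi.single i 1 : Fin n → ℝ) + (1 - x i) • (Pi.single c 1 : Fin n → ℝ)) j
          = x i * (if i = j then 1 else 0) + (1 - x i) * (if c = j then 1 else 0) := by
        intro i
        simp only [Pi.add_apply, Pi.smul_apply, Pi.single_apply, smul_eq_mul, mul_ite, mul_one,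
          mul_zero]
        congr 1 <;> simp [eq_comm]
      by_cases hj : j = c
      · subst hj
        rw [Finset.sum_congr rfl fun i hi => hterm i]
        have : ∑ i ∈ Finset.univ.erase j, (x i * (if i = j then 1 else 0)
            + (1 - x i) * (if j = j then 1 else 0)) = ∑ i ∈ Finset.univ.erase j, (1 - x i) := by
          apply Finset.sum_congr rfl
          intro i hi
          rw [if_neg (Finset.ne_of_mem_erase hi), if_pos rfl]
          ring
        rw [this, Finset.sum_sub_distrib, Finset.sum_const, hcard,
          Finset.sum_erase_eq_sub (Finset.mem_univ j), hsum]
        have : ((n - 1 : ℕ) : ℝ) = (n : ℝ) - 1 := by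
          have : 1 ≤ n := by omega
          push_cast [this]; ring
        rw [nsmul_eq_mul, this]; ring
      · rw [Finset.sum_congr rfl fun i hi => hterm i]
        rw [Finset.sum_eq_single j]
        · simp [hj, Ne.symm hj]
        · intro i hi hij
          rw [if_neg hij, if_neg (fun h : c = j => hj h.symm)]
          ring
        · intro h
          simp [hj] at h
end

section
/- Let n ≥ 2, c ∈ [n], and let 𝔷 = {x ∈ ℝ^n : x_1 + ⋯ + x_n = n−1 and 0 ≤ x_j ≤ 1 for all j ≠ c} (the zonotope of the star graph with center c). A nonempty set F ⊆ ℝ^n is an exposed face of 𝔷 if and only if F = 𝔮(A,B) := {x ∈ 𝔷 : x_a = 0 for all a ∈ A and x_b = 1 for all b ∈ B} for some disjoint subsets A, B ⊆ [n] ∖ {c}. Moreover, every such 𝔮(A,B) is nonempty with affine span of dimension n − 1 − |A| − |B|, and distinct pairs (A,B) of disjoint subsets of [n] ∖ {c} yield distinct faces. -/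
open Finset

/-- The zonotope of the star graph with center `c`:
`𝔷 = {x ∈ ℝ^n : Σ x_i = n−1 and 0 ≤ x_j ≤ 1 for all j ≠ c}`. -/
def starZonotope (n : ℕ) (c : Fin n) : Set (Fin n → ℝ) :=
  {x | ∑ i, x i = (n : ℝ) - 1 ∧ ∀ j, j ≠ c → 0 ≤ x j ∧ x j ≤ 1}

/-- `𝔮(A,B)`: the points of the star zonotope vanishing on `A` and equal to `1` on `B`. -/
def zFaceQ (n : ℕ) (c : Fin n) (A B : Finset (Fin n)) : Set (Fin n → ℝ) :=
  {x ∈ starZonotope n c | (∀ a ∈ A, x a = 0) ∧ (∀ b ∈ B, x b = 1)}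

/-- point of the zonotope with prescribed coordinates off `c`. -/
def zPt (n : ℕ) (c : Fin n) (t : Fin n → ℝ) : Fin n → ℝ :=
  fun i => if i = c then (n : ℝ) - 1 - ∑ j ∈ univ.erase c, t j else t i

lemma zPt_apply_ne {n : ℕ} {c j : Fin n} (t : Fin n → ℝ) (h : j ≠ c) :
    zPt n c t j = t j := by simp [zPt, h]

lemma zPt_apply_self {n : ℕ} (c : Fin n) (t : Fin n → ℝ) :
    zPt n c t c = (n : ℝ) - 1 - ∑ j ∈ univ.erase c, t j := by simp [zPt]

lemma zPt_sum {n : ℕ} (c : Fin n) (t : Fin n → ℝ) :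
    ∑ i, zPt n c t i = (n : ℝ) - 1 := by
  rw [← Finset.sum_erase_add _ _ (mem_univ c)]
  have h1 : ∑ j ∈ univ.erase c, zPt n c t j = ∑ j ∈ univ.erase c, t j :=
    Finset.sum_congr rfl fun j hj => zPt_apply_ne t (Finset.ne_of_mem_erase hj)
  have h2 : zPt n c t c = (n : ℝ) - 1 - ∑ j ∈ univ.erase c, t j := by simp [zPt]
  rw [h1, h2]; ring

lemma zPt_mem {n : ℕ} {c : Fin n} {t : Fin n → ℝ}
    (ht : ∀ j, j ≠ c → 0 ≤ t j ∧ t j ≤ 1) : zPt n c t ∈ starZonotope n c := by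
  refine ⟨zPt_sum c t, fun j hj => ?_⟩
  rw [zPt_apply_ne t hj]; exact ht j hj

lemma zPt_mem_zFaceQ {n : ℕ} {c : Fin n} {A B : Finset (Fin n)} {t : Fin n → ℝ}
    (ht : ∀ j, j ≠ c → 0 ≤ t j ∧ t j ≤ 1) (hcA : c ∉ A) (hcB : c ∉ B)
    (hA : ∀ a ∈ A, t a = 0) (hB : ∀ b ∈ B, t b = 1) :
    zPt n c t ∈ zFaceQ n c A B := by
  refine ⟨zPt_mem ht, fun a ha => ?_, fun b hb => ?_⟩
  · rw [zPt_apply_ne t (by rintro rfl; exact hcA ha)]; exact hA a ha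
  · rw [zPt_apply_ne t (by rintro rfl; exact hcB hb)]; exact hB b hb

lemma lin_apply {n : ℕ} (ℓ : (Fin n → ℝ) →ₗ[ℝ] ℝ) (x : Fin n → ℝ) :
    ℓ x = ∑ i, x i * ℓ (Pi.single i 1) := by
  rw [LinearMap.pi_apply_eq_sum_univ]
  refine Finset.sum_congr rfl fun i _ => ?_
  rw [smul_eq_mul]
  congr 1
  congr 1
  ext j
  simp [Pi.single_apply, eq_comm]

lemma lin_sub {n : ℕ} (c : Fin n) (ℓ : (Fin n → ℝ) →ₗ[ℝ] ℝ) (x y : Fin n → ℝ)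
    (h : ∑ i, x i = ∑ i, y i) :
    ℓ x - ℓ y = ∑ j ∈ univ.erase c,
      (ℓ (Pi.single j 1) - ℓ (Pi.single c 1)) * (x j - y j) := by
  set w : Fin n → ℝ := fun i => ℓ (Pi.single i 1) with hw
  have key : ℓ x - ℓ y = ∑ i, (w i - w c) * (x i - y i) := by
    rw [lin_apply, lin_apply, ← Finset.sum_sub_distrib]
    have : ∀ i, (w i - w c) * (x i - y i)
        = (x i * w i - y i * w i) - w c * (x i - y i) := by intro i; ring
    simp_rw [this, Finset.sum_sub_distrib, ← Finset.mul_sum, Finset.sum_sub_distrib, h]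
    ring
  rw [key, ← Finset.sum_erase_add _ _ (mem_univ c)]
  simp [hw]

lemma maximizer_eq {n : ℕ} (c : Fin n) (ℓ : (Fin n → ℝ) →ₗ[ℝ] ℝ) :
    {x ∈ starZonotope n c | ∀ y ∈ starZonotope n c, ℓ y ≤ ℓ x} =
    zFaceQ n c
      ((univ.erase c).filter (fun j => ℓ (Pi.single j 1) < ℓ (Pi.single c 1)))
      ((univ.erase c).filter (fun j => ℓ (Pi.single c 1) < ℓ (Pi.single j 1))) := by
  set w : Fin n → ℝ := fun i => ℓ (Pi.single i 1) with hw
  ext x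
  constructor
  · rintro ⟨hx, hmax⟩
    refine ⟨hx, fun a ha => ?_, fun b hb => ?_⟩
    · rw [mem_filter, mem_erase] at ha
      obtain ⟨⟨hac, -⟩, haw⟩ := ha
      have hxa := hx.2 a hac
      set x' : Fin n → ℝ := x + x a • (Pi.single c 1 - Pi.single a 1) with hx'
      have hx'mem : x' ∈ starZonotope n c := by
        constructor
        · rw [hx']
          simp only [Pi.add_apply, Pi.smul_apply, Pi.sub_apply, smul_eq_mul]
          rw [Finset.sum_add_distrib, hx.1, ← Finset.mul_sum, Finset.sum_sub_distrib]
          simp [Finset.sum_pi_single']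
        · intro j hj
          have : x' j = if j = a then 0 else x j := by
            rw [hx']
            simp only [Pi.add_apply, Pi.smul_apply, Pi.sub_apply, smul_eq_mul]
            rw [Pi.single_apply, Pi.single_apply]
            by_cases h : j = a
            · simp only [h, if_neg hac, if_pos rfl, if_true]; ring
            · simp [h, hj, if_neg (Ne.symm hj)]
          rw [this]
          by_cases h : j = a
          · simp [h]
          · simp only [if_neg h]; exact hx.2 j hj
      have hle := hmax x' hx'mem
      have : ℓ x' = ℓ x + x a * (w c - w a) := by
        rw [hx']
        simp [map_add, map_smul, map_sub, hw, smul_eq_mul]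
      rw [this] at hle
      nlinarith [hxa.1]
    · rw [mem_filter, mem_erase] at hb
      obtain ⟨⟨hbc, -⟩, hbw⟩ := hb
      have hxb := hx.2 b hbc
      set x' : Fin n → ℝ := x + (1 - x b) • (Pi.single b 1 - Pi.single c 1) with hx'
      have hx'mem : x' ∈ starZonotope n c := by
        constructor
        · rw [hx']
          simp only [Pi.add_apply, Pi.smul_apply, Pi.sub_apply, smul_eq_mul]
          rw [Finset.sum_add_distrib, hx.1, ← Finset.mul_sum, Finset.sum_sub_distrib]
          simp [Finset.sum_pi_single']
        · intro j hj
          have : x' j = if j = b then 1 else x j := by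
            rw [hx']
            simp only [Pi.add_apply, Pi.smul_apply, Pi.sub_apply, smul_eq_mul]
            rw [Pi.single_apply, Pi.single_apply]
            by_cases h : j = b
            · simp only [h, if_neg hbc, if_pos rfl, if_true]; ring
            · simp [h, hj, if_neg (Ne.symm hj)]
          rw [this]
          by_cases h : j = b
          · simp [h]
          · simp only [if_neg h]; exact hx.2 j hj
      have hle := hmax x' hx'mem
      have : ℓ x' = ℓ x + (1 - x b) * (w b - w c) := by
        rw [hx']
        simp [map_add, map_smul, map_sub, hw, smul_eq_mul]
      rw [this] at hle
      nlinarith [hxb.2]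
  · rintro ⟨hx, hA, hB⟩
    refine ⟨hx, fun y hy => ?_⟩
    have h0 : 0 ≤ ℓ x - ℓ y := by
      rw [lin_sub c ℓ x y (by rw [hx.1, hy.1])]
      refine Finset.sum_nonneg fun j hj => ?_
      have hjc := Finset.ne_of_mem_erase hj
      rcases lt_trichotomy (w j) (w c) with h | h | h
      · have hxj : x j = 0 := hA j (mem_filter.2 ⟨hj, h⟩)
        have := (hy.2 j hjc).1
        nlinarith
      · simp [hw] at h ⊢; rw [h]; ring_nf; simp
      · have hxj : x j = 1 := hB j (mem_filter.2 ⟨hj, h⟩)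
        have := (hy.2 j hjc).2
        nlinarith
    linarith

lemma sum_single_mul {n : ℕ} (S : Finset (Fin n)) (g : Fin n → ℝ) (i : Fin n) :
    ∑ j ∈ S, g j * (Pi.single j 1 : Fin n → ℝ) i = if i ∈ S then g i else 0 := by
  simp_rw [Pi.single_apply, mul_ite, mul_one, mul_zero]
  exact Finset.sum_ite_eq S i g

lemma decomp {n : ℕ} {c : Fin n} {A B : Finset (Fin n)} {d : Fin n → ℝ}
    (hsum : ∑ i, d i = 0) (hAB : ∀ j ∈ A ∪ B, d j = 0) :
    d = ∑ j ∈ (univ.erase c) \ (A ∪ B),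
      d j • ((Pi.single j 1 : Fin n → ℝ) - Pi.single c 1) := by
  set S := (univ.erase c) \ (A ∪ B) with hS
  have hSsub : S ⊆ univ.erase c := Finset.sdiff_subset
  have hsumS : ∑ j ∈ S, d j = - d c := by
    have h1 : ∑ j ∈ S, d j = ∑ j ∈ univ.erase c, d j := by
      refine Finset.sum_subset hSsub fun j hj hjS => ?_
      refine hAB j ?_
      by_contra hj'
      exact hjS (Finset.mem_sdiff.2 ⟨hj, hj'⟩)
    have h2 : ∑ j ∈ univ.erase c, d j + d c = 0 := by
      rw [Finset.sum_erase_add _ _ (mem_univ c)]; exact hsum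
    rw [h1]; linarith
  funext i
  rw [Finset.sum_apply]
  simp only [Pi.smul_apply, Pi.sub_apply, smul_eq_mul, mul_sub]
  rw [Finset.sum_sub_distrib, sum_single_mul, ← Finset.sum_mul]
  by_cases hic : i = c
  · subst hic
    have hiS : i ∉ S := fun h => (Finset.mem_erase.1 (hSsub h)).1 rfl
    rw [if_neg hiS, hsumS]
    simp
  · rw [Pi.single_eq_of_ne hic, mul_zero, sub_zero]
    by_cases hiS : i ∈ S
    · rw [if_pos hiS]
    · rw [if_neg hiS]
      refine hAB i ?_
      by_contra hi'
      exact hiS (Finset.mem_sdiff.2 ⟨Finset.mem_erase.2 ⟨hic, mem_univ i⟩, hi'⟩)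

lemma gen_mem_diff {n : ℕ} {c : Fin n} {A B : Finset (Fin n)}
    (hAB : Disjoint A B) (hcA : c ∉ A) (hcB : c ∉ B) {j : Fin n}
    (hj : j ∈ (univ.erase c) \ (A ∪ B)) :
    ∃ p₀ ∈ zFaceQ n c A B, ∃ p₁ ∈ zFaceQ n c A B,
      p₁ - p₀ = Pi.single j (1:ℝ) - Pi.single c 1 := by
  obtain ⟨hjc', hjAB⟩ := Finset.mem_sdiff.1 hj
  have hjc : j ≠ c := (Finset.mem_erase.1 hjc').1
  have hjA : j ∉ A := fun h => hjAB (Finset.mem_union_left _ h)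
  have hjB : j ∉ B := fun h => hjAB (Finset.mem_union_right _ h)
  set t₀ : Fin n → ℝ := fun i => if i ∈ B then 1 else 0 with ht₀
  set t₁ : Fin n → ℝ := Function.update t₀ j 1 with ht₁
  have ht₀r : ∀ i, i ≠ c → 0 ≤ t₀ i ∧ t₀ i ≤ 1 := by
    intro i _; by_cases h : i ∈ B <;> simp [ht₀, h]
  have ht₁r : ∀ i, i ≠ c → 0 ≤ t₁ i ∧ t₁ i ≤ 1 := by
    intro i hi
    rw [ht₁, Function.update_apply]
    by_cases h : i = j
    · simp [h]
    · rw [if_neg h]; exact ht₀r i hi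
  refine ⟨zPt n c t₀, ?_, zPt n c t₁, ?_, ?_⟩
  · refine zPt_mem_zFaceQ ht₀r hcA hcB (fun a ha => ?_) (fun b hb => ?_)
    · simp [ht₀, Finset.disjoint_left.1 hAB ha]
    · simp [ht₀, hb]
  · refine zPt_mem_zFaceQ ht₁r hcA hcB (fun a ha => ?_) (fun b hb => ?_)
    · have : a ≠ j := fun h => hjA (h ▸ ha)
      simp [ht₁, Function.update_apply, this, ht₀, Finset.disjoint_left.1 hAB ha]
    · have : b ≠ j := fun h => hjB (h ▸ hb)
      simp [ht₁, Function.update_apply, this, ht₀, hb]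
  · have hsum : ∑ i ∈ univ.erase c, t₁ i = (∑ i ∈ univ.erase c, t₀ i) + 1 := by
      rw [ht₁, Finset.sum_update_of_mem (Finset.mem_erase.2 ⟨hjc, mem_univ j⟩)]
      have : ∑ i ∈ univ.erase c, t₀ i
          = t₀ j + ∑ i ∈ (univ.erase c) \ {j}, t₀ i := by
        rw [Finset.sum_eq_sum_sdiff_singleton_add (Finset.mem_erase.2 ⟨hjc, mem_univ j⟩)]
        ring
      rw [this]
      have : t₀ j = 0 := by simp [ht₀, hjB]
      rw [this]; ring
    funext i
    simp only [Pi.sub_apply]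
    by_cases hic : i = c
    · subst hic
      rw [zPt_apply_self, zPt_apply_self, Pi.single_eq_of_ne (Ne.symm hjc),
        Pi.single_eq_same, hsum]
      ring
    · rw [zPt_apply_ne _ hic, zPt_apply_ne _ hic, Pi.single_eq_of_ne hic, sub_zero,
        ht₁, Function.update_apply, Pi.single_apply]
      by_cases h : i = j
      · subst h
        simp [ht₀, hjB]
      · rw [if_neg h, if_neg h]; ring

lemma zFaceQ_nonempty {n : ℕ} {c : Fin n} {A B : Finset (Fin n)}
    (hAB : Disjoint A B) (hcA : c ∉ A) (hcB : c ∉ B) :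
    (zFaceQ n c A B).Nonempty := by
  refine ⟨zPt n c (fun i => if i ∈ B then 1 else 0),
    zPt_mem_zFaceQ ?_ hcA hcB ?_ ?_⟩
  · intro i _; by_cases h : i ∈ B <;> simp [h]
  · intro a ha; simp [Finset.disjoint_left.1 hAB ha]
  · intro b hb; simp [hb]

lemma vectorSpan_zFaceQ {n : ℕ} {c : Fin n} {A B : Finset (Fin n)}
    (hAB : Disjoint A B) (hcA : c ∉ A) (hcB : c ∉ B) :
    vectorSpan ℝ (zFaceQ n c A B) =
    Submodule.span ℝ (Set.range (fun j : ↥((univ.erase c) \ (A ∪ B)) =>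
      (Pi.single (j : Fin n) 1 : Fin n → ℝ) - Pi.single c 1)) := by
  apply le_antisymm
  · rw [vectorSpan_def, Submodule.span_le]
    rintro v hv
    rw [Set.mem_vsub] at hv
    obtain ⟨x, hx, y, hy, rfl⟩ := hv
    have hd1 : ∑ i, (x - y) i = 0 := by
      simp only [Pi.sub_apply]
      rw [Finset.sum_sub_distrib, hx.1.1, hy.1.1, sub_self]
    have hd2 : ∀ j ∈ A ∪ B, (x - y) j = 0 := by
      intro j hj
      rcases Finset.mem_union.1 hj with h | h
      · simp [Pi.sub_apply, hx.2.1 j h, hy.2.1 j h]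
      · simp [Pi.sub_apply, hx.2.2 j h, hy.2.2 j h]
    have hdec := decomp (c := c) hd1 hd2
    show x - y ∈ _
    rw [hdec]
    refine Submodule.sum_mem _ fun j hj => Submodule.smul_mem _ _ ?_
    exact Submodule.subset_span ⟨⟨j, hj⟩, rfl⟩
  · rw [Submodule.span_le]
    rintro v ⟨j, rfl⟩
    obtain ⟨p₀, hp₀, p₁, hp₁, hdiff⟩ := gen_mem_diff hAB hcA hcB j.2
    show (Pi.single (j : Fin n) 1 : Fin n → ℝ) - Pi.single c 1 ∈ _
    rw [← hdiff]
    exact vsub_mem_vectorSpan ℝ hp₁ hp₀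

lemma li_family {n : ℕ} (c : Fin n) (S : Finset (Fin n)) (hcS : c ∉ S) :
    LinearIndependent ℝ (fun j : ↥S =>
      (Pi.single (j : Fin n) 1 : Fin n → ℝ) - Pi.single c 1) := by
  rw [Fintype.linearIndependent_iff]
  intro g hg j₀
  have h := congrFun hg (j₀ : Fin n)
  rw [Finset.sum_apply] at h
  have hj₀c : (j₀ : Fin n) ≠ c := fun h' => hcS (h' ▸ j₀.2)
  simp only [Pi.smul_apply, Pi.sub_apply, smul_eq_mul, Pi.single_apply,
    if_neg hj₀c, sub_zero, mul_ite, mul_one, mul_zero, Pi.zero_apply] at h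
  have h2 : ∀ j : ↥S, (if (j₀ : Fin n) = (j : Fin n) then g j else 0)
      = (if j₀ = j then g j else 0) := by
    intro j
    by_cases hh : j₀ = j
    · rw [if_pos hh, if_pos (by rw [hh])]
    · rw [if_neg hh, if_neg (fun h' => hh (Subtype.ext h'))]
  rw [Finset.sum_congr rfl (fun j _ => h2 j), Finset.sum_ite_eq] at h
  simpa using h

lemma finrank_zFaceQ {n : ℕ} {c : Fin n} {A B : Finset (Fin n)}
    (hAB : Disjoint A B) (hcA : c ∉ A) (hcB : c ∉ B) :
    Module.finrank ℝ (vectorSpan ℝ (zFaceQ n c A B)) = n - 1 - A.card - B.card := by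
  rw [vectorSpan_zFaceQ hAB hcA hcB]
  have hcS : c ∉ (univ.erase c) \ (A ∪ B) :=
    fun h => (Finset.mem_erase.1 (Finset.mem_sdiff.1 h).1).1 rfl
  rw [finrank_span_eq_card (li_family c _ hcS), Fintype.card_coe]
  have hsub : A ∪ B ⊆ univ.erase c := by
    intro j hj
    refine Finset.mem_erase.2 ⟨?_, mem_univ j⟩
    rintro rfl
    rcases Finset.mem_union.1 hj with h | h
    · exact hcA h
    · exact hcB h
  rw [Finset.card_sdiff_of_subset hsub, Finset.card_union_of_disjoint hAB,
    Finset.card_erase_of_mem (mem_univ c), Finset.card_univ, Fintype.card_fin]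
  omega

lemma faces_subset {n : ℕ} {c : Fin n} {A B A' B' : Finset (Fin n)}
    (hcA : c ∉ A) (hcB : c ∉ B)
    (hAB' : Disjoint A' B') (hcA' : c ∉ A') (hcB' : c ∉ B')
    (h : zFaceQ n c A' B' ⊆ zFaceQ n c A B) : A ⊆ A' ∧ B ⊆ B' := by
  constructor
  · intro a ha
    by_contra haA'
    have hac : a ≠ c := fun h' => hcA (h' ▸ ha)
    set t : Fin n → ℝ := fun j => if j ∈ B' then 1 else if j = a then 1/2 else 0 with ht
    have hmem : zPt n c t ∈ zFaceQ n c A' B' := by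
      refine zPt_mem_zFaceQ ?_ hcA' hcB' ?_ ?_
      · intro j _
        by_cases h1 : j ∈ B'
        · simp [ht, h1]
        · by_cases h2 : j = a
          · subst h2; norm_num [ht, h1]
          · simp [ht, h1, h2]
      · intro a' ha'
        have h1 : a' ∉ B' := Finset.disjoint_left.1 hAB' ha'
        have h2 : a' ≠ a := fun h' => haA' (h' ▸ ha')
        simp [ht, h1, h2]
      · intro b hb; simp [ht, hb]
    have := (h hmem).2.1 a ha
    rw [zPt_apply_ne _ hac] at this
    by_cases h1 : a ∈ B' <;> simp [ht, h1] at this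
  · intro b hb
    by_contra hbB'
    have hbc : b ≠ c := fun h' => hcB (h' ▸ hb)
    set t : Fin n → ℝ := fun j => if j ∈ B' then 1 else 0 with ht
    have hmem : zPt n c t ∈ zFaceQ n c A' B' := by
      refine zPt_mem_zFaceQ ?_ hcA' hcB' ?_ ?_
      · intro j _; by_cases h1 : j ∈ B' <;> simp [ht, h1]
      · intro a' ha'; simp [ht, Finset.disjoint_left.1 hAB' ha']
      · intro b' hb'; simp [ht, hb']
    have := (h hmem).2.2 b hb
    rw [zPt_apply_ne _ hbc] at this
    simp [ht, hbB'] at this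


/-- Faces of the star zonotope: a nonempty `F` is an exposed face of `𝔷` iff
`F = 𝔮(A,B)` for some disjoint `A, B ⊆ [n] ∖ {c}`; every such `𝔮(A,B)` is nonempty with
affine span of dimension `n − 1 − |A| − |B|`, and distinct pairs `(A,B)` yield distinct
faces. -/
theorem star_zonotope_faces (n : ℕ) (hn : 2 ≤ n) (c : Fin n) :
    (∀ F : Set (Fin n → ℝ),
      IsExposedFaceOf (starZonotope n c) F ↔
      ∃ A B : Finset (Fin n), Disjoint A B ∧ c ∉ A ∧ c ∉ B ∧ F = zFaceQ n c A B) ∧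
    (∀ A B : Finset (Fin n), Disjoint A B → c ∉ A → c ∉ B →
      (zFaceQ n c A B).Nonempty ∧
      Module.finrank ℝ (affineSpan ℝ (zFaceQ n c A B)).direction
        = n - 1 - A.card - B.card) ∧
    (∀ A B A' B' : Finset (Fin n), Disjoint A B → c ∉ A → c ∉ B →
      Disjoint A' B' → c ∉ A' → c ∉ B' →
      zFaceQ n c A B = zFaceQ n c A' B' → A = A' ∧ B = B') := by
  refine ⟨fun F => ⟨?_, ?_⟩, fun A B hAB hcA hcB => ⟨zFaceQ_nonempty hAB hcA hcB, ?_⟩,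
    fun A B A' B' hAB hcA hcB hAB' hcA' hcB' heq => ?_⟩
  · rintro ⟨hne, ℓ, rfl⟩
    refine ⟨(univ.erase c).filter (fun j => ℓ (Pi.single j 1) < ℓ (Pi.single c 1)),
      (univ.erase c).filter (fun j => ℓ (Pi.single c 1) < ℓ (Pi.single j 1)),
      ?_, ?_, ?_, maximizer_eq c ℓ⟩
    · rw [Finset.disjoint_left]
      intro j hj hj'
      exact absurd ((mem_filter.1 hj).2.trans (mem_filter.1 hj').2) (lt_irrefl _)
    · exact fun h => (Finset.mem_erase.1 (mem_filter.1 h).1).1 rfl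
    · exact fun h => (Finset.mem_erase.1 (mem_filter.1 h).1).1 rfl
  · rintro ⟨A, B, hAB, hcA, hcB, rfl⟩
    refine ⟨zFaceQ_nonempty hAB hcA hcB,
      (∑ b ∈ B, LinearMap.proj b) - (∑ a ∈ A, LinearMap.proj a), ?_⟩
    set ℓ : (Fin n → ℝ) →ₗ[ℝ] ℝ :=
      (∑ b ∈ B, LinearMap.proj b) - (∑ a ∈ A, LinearMap.proj a) with hℓ
    have hw : ∀ i, ℓ (Pi.single i 1)
        = (if i ∈ B then (1:ℝ) else 0) - (if i ∈ A then (1:ℝ) else 0) := by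
      intro i
      rw [hℓ]
      simp only [LinearMap.sub_apply, LinearMap.coe_sum, Finset.sum_apply,
        LinearMap.proj_apply]
      rw [show ∀ s : Finset (Fin n), ∑ j ∈ s, Pi.single i (1:ℝ) j
          = if i ∈ s then 1 else 0 from fun s => Finset.sum_pi_single' i 1 s,
        show ∀ s : Finset (Fin n), ∑ j ∈ s, Pi.single i (1:ℝ) j
          = if i ∈ s then 1 else 0 from fun s => Finset.sum_pi_single' i 1 s]
    have hwc : ℓ (Pi.single c 1) = 0 := by rw [hw]; simp [hcA, hcB]
    have hA' : (univ.erase c).filter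
        (fun j => ℓ (Pi.single j 1) < ℓ (Pi.single c 1)) = A := by
      ext j
      rw [mem_filter, Finset.mem_erase, hwc, hw]
      constructor
      · rintro ⟨-, hlt⟩
        by_cases h1 : j ∈ A
        · exact h1
        · by_cases h2 : j ∈ B
          · simp [h1, h2] at hlt; norm_num at hlt
          · simp [h1, h2] at hlt
      · intro hj
        have hjB : j ∉ B := Finset.disjoint_left.1 hAB hj
        refine ⟨⟨fun h => hcA (h ▸ hj), mem_univ j⟩, ?_⟩
        simp [hj, hjB]
    have hB' : (univ.erase c).filter
        (fun j => ℓ (Pi.single c 1) < ℓ (Pi.single j 1)) = B := by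
      ext j
      rw [mem_filter, Finset.mem_erase, hwc, hw]
      constructor
      · rintro ⟨-, hlt⟩
        by_cases h2 : j ∈ B
        · exact h2
        · by_cases h1 : j ∈ A
          · simp [h1, h2] at hlt; norm_num at hlt
          · simp [h1, h2] at hlt
      · intro hj
        have hjA : j ∉ A := Finset.disjoint_right.1 hAB hj
        refine ⟨⟨fun h => hcB (h ▸ hj), mem_univ j⟩, ?_⟩
        simp [hj, hjA]
    rw [maximizer_eq c ℓ, hA', hB']
  · rw [direction_affineSpan]
    exact finrank_zFaceQ hAB hcA hcB
  · have h1 := faces_subset hcA hcB hAB' hcA' hcB' heq.symm.le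
    have h2 := faces_subset hcA' hcB' hAB hcA hcB heq.le
    exact ⟨le_antisymm h1.1 h2.1, le_antisymm h1.2 h2.2⟩
end

section
/- Let (w1,Γ1,I1) and (w2,Γ2,I2) be pure ordered complexes on disjoint vertex sets such that each Γi is lex-shellable with respect to wi, i.e., the wi-lexicographic order on the facets of Γi is a shelling order. Then for every shuffle w of w1 and w2, the join Γ1 * Γ2 is lex-shellable with respect to w: the w-lexicographic order on the facets of Γ1 * Γ2 is a shelling order. -/
variable {α : Type*} [DecidableEq α]

/-- `Γ` is a simplicial complex on the finite ground set `E`. -/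
def IsComplexOn (E : Finset α) (Γ : Set (Finset α)) : Prop :=
  (∅ : Finset α) ∈ Γ ∧ (∀ γ ∈ Γ, γ ⊆ E) ∧ ∀ γ ∈ Γ, ∀ β ⊆ γ, β ∈ Γ

/-- `φ` is a facet (maximal face) of `Γ`. -/
def IsFacetOf (Γ : Set (Finset α)) (φ : Finset α) : Prop :=
  φ ∈ Γ ∧ ∀ ψ ∈ Γ, φ ⊆ ψ → ψ = φ

/-- A complex is pure if all facets have the same cardinality. -/
def IsPureC (Γ : Set (Finset α)) : Prop :=
  ∀ φ ψ, IsFacetOf Γ φ → IsFacetOf Γ ψ → φ.card = ψ.card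

/-- The join of two simplicial complexes on disjoint vertex sets. -/
def joinC (Γ1 Γ2 : Set (Finset α)) : Set (Finset α) :=
  {γ | ∃ γ1 ∈ Γ1, ∃ γ2 ∈ Γ2, γ = γ1 ∪ γ2}

/-- Strict lexicographic order on finite subsets with respect to the linear order `w`. -/
def lexLT (w : LinearOrder α) (s t : Finset α) : Prop :=
  ∃ m, m ∈ s ∧ m ∉ t ∧ ∀ x, w.lt x m → (x ∈ s ↔ x ∈ t)

def lexLE (w : LinearOrder α) (s t : Finset α) : Prop :=
  s = t ∨ lexLT w s t

/-- `r` is a shelling order for the pure complex `Γ`: whenever `ψ, φ` are facets with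
`ψ ⊑ φ` and `ψ ≠ φ`, there exist a facet `ρ ⊑ φ`, `ρ ≠ φ`, and a vertex `x ∈ φ` with
`ψ ∩ φ ⊆ ρ ∩ φ = φ ∖ {x}`. -/
def IsShellingOrder (Γ : Set (Finset α)) (r : Finset α → Finset α → Prop) : Prop :=
  ∀ ψ φ, IsFacetOf Γ ψ → IsFacetOf Γ φ → r ψ φ → ψ ≠ φ →
    ∃ ρ x, IsFacetOf Γ ρ ∧ r ρ φ ∧ ρ ≠ φ ∧ x ∈ φ ∧
      ψ ∩ φ ⊆ ρ ∩ φ ∧ ρ ∩ φ = φ.erase x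

/-- `w` is a shuffle of `w1` and `w2`. -/
def IsShuffle (w1 w2 w : LinearOrder α) (I1 I2 : Finset α) : Prop :=
  (∀ x ∈ I1, ∀ y ∈ I1, w.le x y ↔ w1.le x y) ∧
  (∀ x ∈ I2, ∀ y ∈ I2, w.le x y ↔ w2.le x y)



lemma shuffle_lt_iff {w w' : LinearOrder α} {I : Finset α}
    (h : ∀ x ∈ I, ∀ y ∈ I, w.le x y ↔ w'.le x y)
    {x y : α} (hx : x ∈ I) (hy : y ∈ I) : w.lt x y ↔ w'.lt x y := by
  rw [w.lt_iff_le_not_ge, w'.lt_iff_le_not_ge, h x hx y hy, h y hy x hx]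

lemma joinC_comm (Γ1 Γ2 : Set (Finset α)) : joinC Γ1 Γ2 = joinC Γ2 Γ1 := by
  ext γ
  constructor <;> rintro ⟨a, ha, b, hb, rfl⟩ <;> exact ⟨b, hb, a, ha, Finset.union_comm _ _⟩

lemma inter_facets {I1 I2 : Finset α} {Γ1 Γ2 : Set (Finset α)}
    (h1 : IsComplexOn I1 Γ1) (h2 : IsComplexOn I2 Γ2) (hdisj : Disjoint I1 I2)
    {φ : Finset α} (hφ : IsFacetOf (joinC Γ1 Γ2) φ) :
    IsFacetOf Γ1 (φ ∩ I1) ∧ IsFacetOf Γ2 (φ ∩ I2) ∧ φ = (φ ∩ I1) ∪ (φ ∩ I2) := by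
  obtain ⟨γ1, hγ1, γ2, hγ2, rfl⟩ := hφ.1
  have hγ1I : γ1 ⊆ I1 := h1.2.1 _ hγ1
  have hγ2I : γ2 ⊆ I2 := h2.2.1 _ hγ2
  have hd := Finset.disjoint_left.mp hdisj
  have e1 : (γ1 ∪ γ2) ∩ I1 = γ1 := by
    ext a
    simp only [Finset.mem_inter, Finset.mem_union]
    constructor
    · rintro ⟨ha | ha, haI⟩
      · exact ha
      · exact absurd (hγ2I ha) (fun h => hd haI h)
    · exact fun ha => ⟨Or.inl ha, hγ1I ha⟩
  have e2 : (γ1 ∪ γ2) ∩ I2 = γ2 := by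
    ext a
    simp only [Finset.mem_inter, Finset.mem_union]
    constructor
    · rintro ⟨ha | ha, haI⟩
      · exact absurd haI (hd (hγ1I ha))
      · exact ha
    · exact fun ha => ⟨Or.inr ha, hγ2I ha⟩
  rw [e1, e2]
  refine ⟨⟨hγ1, ?_⟩, ⟨hγ2, ?_⟩, rfl⟩
  · intro ψ1 hψ1 hsub
    have hmem : ψ1 ∪ γ2 ∈ joinC Γ1 Γ2 := ⟨ψ1, hψ1, γ2, hγ2, rfl⟩
    have := hφ.2 _ hmem (Finset.union_subset_union hsub (le_refl γ2))
    have hψI : ψ1 ⊆ I1 := h1.2.1 _ hψ1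
    apply Finset.Subset.antisymm _ hsub
    intro a ha
    have : a ∈ γ1 ∪ γ2 := this ▸ Finset.mem_union_left _ ha
    rcases Finset.mem_union.mp this with h | h
    · exact h
    · exact absurd (hγ2I h) (fun hh => hd (hψI ha) hh)
  · intro ψ2 hψ2 hsub
    have hmem : γ1 ∪ ψ2 ∈ joinC Γ1 Γ2 := ⟨γ1, hγ1, ψ2, hψ2, rfl⟩
    have := hφ.2 _ hmem (Finset.union_subset_union (le_refl γ1) hsub)
    have hψI : ψ2 ⊆ I2 := h2.2.1 _ hψ2
    apply Finset.Subset.antisymm _ hsub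
    intro a ha
    have : a ∈ γ1 ∪ γ2 := this ▸ Finset.mem_union_right _ ha
    rcases Finset.mem_union.mp this with h | h
    · exact absurd (hψI ha) (hd (hγ1I h))
    · exact h

lemma union_facet {I1 I2 : Finset α} {Γ1 Γ2 : Set (Finset α)}
    (h1 : IsComplexOn I1 Γ1) (h2 : IsComplexOn I2 Γ2) (hdisj : Disjoint I1 I2)
    {φ1 φ2 : Finset α} (hφ1 : IsFacetOf Γ1 φ1) (hφ2 : IsFacetOf Γ2 φ2) :
    IsFacetOf (joinC Γ1 Γ2) (φ1 ∪ φ2) := by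
  have hd := Finset.disjoint_left.mp hdisj
  refine ⟨⟨φ1, hφ1.1, φ2, hφ2.1, rfl⟩, ?_⟩
  rintro ψ ⟨ψ1, hψ1, ψ2, hψ2, rfl⟩ hsub
  have hψ1I : ψ1 ⊆ I1 := h1.2.1 _ hψ1
  have hψ2I : ψ2 ⊆ I2 := h2.2.1 _ hψ2
  have hφ1I : φ1 ⊆ I1 := h1.2.1 _ hφ1.1
  have hφ2I : φ2 ⊆ I2 := h2.2.1 _ hφ2.1
  have s1 : φ1 ⊆ ψ1 := by
    intro a ha
    rcases Finset.mem_union.mp (hsub (Finset.mem_union_left _ ha)) with h | h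
    · exact h
    · exact absurd (hψ2I h) (hd (hφ1I ha))
  have s2 : φ2 ⊆ ψ2 := by
    intro a ha
    rcases Finset.mem_union.mp (hsub (Finset.mem_union_right _ ha)) with h | h
    · exact absurd (hφ2I ha) (hd (hψ1I h))
    · exact h
  rw [hφ1.2 _ hψ1 s1, hφ2.2 _ hψ2 s2]

lemma lexLT_lift {w1 w2 w : LinearOrder α} {I1 I2 : Finset α}
    (hsh : IsShuffle w1 w2 w I1 I2) (hdisj : Disjoint I1 I2)
    {ρ1 φ1 φ2 : Finset α} (hρ1 : ρ1 ⊆ I1) (hφ1 : φ1 ⊆ I1) (hφ2 : φ2 ⊆ I2)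
    (h : lexLT w1 ρ1 φ1) : lexLT w (ρ1 ∪ φ2) (φ1 ∪ φ2) := by
  obtain ⟨m, hmρ, hmφ, hag⟩ := h
  have hd := Finset.disjoint_left.mp hdisj
  have hmI1 : m ∈ I1 := hρ1 hmρ
  refine ⟨m, Finset.mem_union_left _ hmρ, ?_, ?_⟩
  · intro hc
    rcases Finset.mem_union.mp hc with h | h
    · exact hmφ h
    · exact hd hmI1 (hφ2 h)
  · intro x hx
    by_cases hxI : x ∈ I1
    · have : w1.lt x m := (shuffle_lt_iff hsh.1 hxI hmI1).mp hx
      have := hag x this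
      simp only [Finset.mem_union]
      constructor
      · rintro (h | h)
        · exact Or.inl (this.mp h)
        · exact Or.inr h
      · rintro (h | h)
        · exact Or.inl (this.mpr h)
        · exact Or.inr h
    · simp only [Finset.mem_union]
      constructor
      · rintro (h | h)
        · exact absurd (hρ1 h) hxI
        · exact Or.inr h
      · rintro (h | h)
        · exact absurd (hφ1 h) hxI
        · exact Or.inr h

/-- Core asymmetric lemma: the shelling step when the lex witness lies in `I1`. -/
lemma join_shelling_core
    (w1 w2 w : LinearOrder α) (I1 I2 : Finset α) (Γ1 Γ2 : Set (Finset α))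
    (h1 : IsComplexOn I1 Γ1) (h2 : IsComplexOn I2 Γ2) (hdisj : Disjoint I1 I2)
    (hs1 : IsShellingOrder Γ1 (lexLE w1))
    (hsh : IsShuffle w1 w2 w I1 I2)
    (ψ φ : Finset α) (hψ : IsFacetOf (joinC Γ1 Γ2) ψ) (hφ : IsFacetOf (joinC Γ1 Γ2) φ)
    (m : α) (hmψ : m ∈ ψ) (hmφ : m ∉ φ) (hmI1 : m ∈ I1)
    (hag : ∀ x, w.lt x m → (x ∈ ψ ↔ x ∈ φ)) :
    ∃ ρ x, IsFacetOf (joinC Γ1 Γ2) ρ ∧ lexLE w ρ φ ∧ ρ ≠ φ ∧ x ∈ φ ∧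
      ψ ∩ φ ⊆ ρ ∩ φ ∧ ρ ∩ φ = φ.erase x := by
  have hd := Finset.disjoint_left.mp hdisj
  obtain ⟨hψ1f, hψ2f, hψeq⟩ := inter_facets h1 h2 hdisj hψ
  obtain ⟨hφ1f, hφ2f, hφeq⟩ := inter_facets h1 h2 hdisj hφ
  set ψ1 := ψ ∩ I1 with hψ1def
  set φ1 := φ ∩ I1 with hφ1def
  set φ2 := φ ∩ I2 with hφ2def
  -- lexLT w1 ψ1 φ1
  have hlt1 : lexLT w1 ψ1 φ1 := by
    refine ⟨m, Finset.mem_inter.mpr ⟨hmψ, hmI1⟩, fun hc => hmφ (Finset.mem_inter.mp hc).1, ?_⟩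
    intro x hx
    by_cases hxI : x ∈ I1
    · have hxw : w.lt x m := (shuffle_lt_iff hsh.1 hxI hmI1).mpr hx
      have := hag x hxw
      simp only [hψ1def, hφ1def, Finset.mem_inter]
      exact ⟨fun h => ⟨this.mp h.1, h.2⟩, fun h => ⟨this.mpr h.1, h.2⟩⟩
    · simp only [hψ1def, hφ1def, Finset.mem_inter]
      exact ⟨fun h => absurd h.2 hxI, fun h => absurd h.2 hxI⟩
  have hne1 : ψ1 ≠ φ1 := by
    intro hc
    obtain ⟨m', hm'⟩ := hlt1
    rw [hc] at hm'
    exact hm'.2.1 hm'.1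
  obtain ⟨ρ1, x, hρ1f, hρ1le, hρ1ne, hxφ1, hsub1, herase1⟩ :=
    hs1 ψ1 φ1 hψ1f hφ1f (Or.inr hlt1) hne1
  have hρ1I : ρ1 ⊆ I1 := h1.2.1 _ hρ1f.1
  have hφ1I : φ1 ⊆ I1 := Finset.inter_subset_right
  have hφ2I : φ2 ⊆ I2 := Finset.inter_subset_right
  have hxI1 : x ∈ I1 := hφ1I hxφ1
  refine ⟨ρ1 ∪ φ2, x, union_facet h1 h2 hdisj hρ1f hφ2f, ?_, ?_, ?_, ?_, ?_⟩
  · -- lexLE w (ρ1 ∪ φ2) φ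
    rcases hρ1le with hceq | hlt
    · exact absurd hceq hρ1ne
    · right
      rw [hφeq]
      exact lexLT_lift hsh hdisj hρ1I hφ1I hφ2I hlt
  · -- ρ1 ∪ φ2 ≠ φ
    intro hc
    apply hρ1ne
    have : (ρ1 ∪ φ2) ∩ I1 = ρ1 := by
      ext a
      simp only [Finset.mem_inter, Finset.mem_union]
      constructor
      · rintro ⟨h | h, haI⟩
        · exact h
        · exact absurd (hφ2I h) (hd haI)
      · exact fun ha => ⟨Or.inl ha, hρ1I ha⟩
    rw [← this, hc]
  · exact (Finset.mem_inter.mp hxφ1).1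
  · -- ψ ∩ φ ⊆ (ρ1 ∪ φ2) ∩ φ
    intro a ha
    obtain ⟨haψ, haφ⟩ := Finset.mem_inter.mp ha
    have haI : a ∈ I1 ∪ I2 := by
      rw [hψeq] at haψ
      rcases Finset.mem_union.mp haψ with h | h
      · exact Finset.mem_union_left _ (Finset.mem_inter.mp h).2
      · exact Finset.mem_union_right _ (Finset.mem_inter.mp h).2
    refine Finset.mem_inter.mpr ⟨?_, haφ⟩
    rcases Finset.mem_union.mp haI with h | h
    · have : a ∈ ψ1 ∩ φ1 := by
        simp only [hψ1def, hφ1def, Finset.mem_inter]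
        exact ⟨⟨haψ, h⟩, haφ, h⟩
      exact Finset.mem_union_left _ (Finset.mem_inter.mp (hsub1 this)).1
    · exact Finset.mem_union_right _ (Finset.mem_inter.mpr ⟨haφ, h⟩)
  · -- (ρ1 ∪ φ2) ∩ φ = φ.erase x
    ext a
    simp only [Finset.mem_inter, Finset.mem_union, Finset.mem_erase]
    constructor
    · rintro ⟨h | h, haφ⟩
      · have haI1 : a ∈ I1 := hρ1I h
        have haφ1 : a ∈ φ1 := Finset.mem_inter.mpr ⟨haφ, haI1⟩
        have : a ∈ ρ1 ∩ φ1 := Finset.mem_inter.mpr ⟨h, haφ1⟩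
        rw [herase1] at this
        exact ⟨(Finset.mem_erase.mp this).1, haφ⟩
      · have : a ∈ I2 := (Finset.mem_inter.mp h).2
        exact ⟨fun hc => hd hxI1 (hc ▸ this), haφ⟩
    · rintro ⟨hax, haφ⟩
      refine ⟨?_, haφ⟩
      rw [hφeq] at haφ
      rcases Finset.mem_union.mp haφ with h | h
      · left
        have : a ∈ φ1.erase x := Finset.mem_erase.mpr ⟨hax, h⟩
        rw [← herase1] at this
        exact (Finset.mem_inter.mp this).1
      · exact Or.inr h


/-- If `(w1,Γ1)` and `(w2,Γ2)` are pure ordered complexes on disjoint vertex sets that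
are lex-shellable, then for every shuffle `w` of `w1` and `w2` the join `Γ1 * Γ2` is
lex-shellable with respect to `w`. -/
theorem join_lexShellable
    (w1 w2 w : LinearOrder α) (I1 I2 : Finset α) (Γ1 Γ2 : Set (Finset α))
    (h1 : IsComplexOn I1 Γ1) (h2 : IsComplexOn I2 Γ2) (hdisj : Disjoint I1 I2)
    (hp1 : IsPureC Γ1) (hp2 : IsPureC Γ2)
    (hs1 : IsShellingOrder Γ1 (lexLE w1)) (hs2 : IsShellingOrder Γ2 (lexLE w2))
    (hsh : IsShuffle w1 w2 w I1 I2) :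
    IsShellingOrder (joinC Γ1 Γ2) (lexLE w) := by
  intro ψ φ hψ hφ hle hne
  rcases hle with hceq | hlt
  · exact absurd hceq hne
  obtain ⟨m, hmψ, hmφ, hag⟩ := hlt
  have hmI : m ∈ I1 ∪ I2 := by
    obtain ⟨_, _, hψeq⟩ := inter_facets h1 h2 hdisj hψ
    rw [hψeq] at hmψ
    rcases Finset.mem_union.mp hmψ with h | h
    · exact Finset.mem_union_left _ (Finset.mem_inter.mp h).2
    · exact Finset.mem_union_right _ (Finset.mem_inter.mp h).2
  rcases Finset.mem_union.mp hmI with hmI1 | hmI2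
  · exact join_shelling_core w1 w2 w I1 I2 Γ1 Γ2 h1 h2 hdisj hs1 hsh ψ φ hψ hφ m hmψ hmφ hmI1 hag
  · have := join_shelling_core w2 w1 w I2 I1 Γ2 Γ1 h2 h1 hdisj.symm hs2 ⟨hsh.2, hsh.1⟩ ψ φ
      (joinC_comm Γ1 Γ2 ▸ hψ) (joinC_comm Γ1 Γ2 ▸ hφ) m hmψ hmφ hmI2 hag
    rw [joinC_comm Γ2 Γ1] at this
    exact this
end

section
/- Let (w,Γ,I) be a pure ordered complex that is shifted with respect to w, and let A be an initial segment of w. Then the initial restriction (w,Γ)|A = (w|_A, Γ|A) and the initial contraction (w,Γ)/A = (w|_{I∖A}, link_Γ(φ)), where φ is the lexicographically minimal facet of Γ|A, are both shifted with respect to the induced orders. -/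
variable {α : Type*} [DecidableEq α]

/-- The restriction `Γ|S` of a simplicial complex. -/
def restrictC (Γ : Set (Finset α)) (S : Finset α) : Set (Finset α) :=
  {γ ∈ Γ | γ ⊆ S}

/-- The link of a face `σ` in `Γ`. -/
def linkC (Γ : Set (Finset α)) (σ : Finset α) : Set (Finset α) :=
  {β | Disjoint β σ ∧ β ∪ σ ∈ Γ}

/-- `φ` is the lexicographically minimal facet of `Γ` with respect to `w`. -/
def IsLexMinFacet (w : LinearOrder α) (Γ : Set (Finset α)) (φ : Finset α) : Prop :=
  IsFacetOf Γ φ ∧ ∀ ψ, IsFacetOf Γ ψ → lexLE w φ ψ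

/-- `A` is an initial segment of the linear order `w` on the ground set `E`. -/
def IsInitialSeg (w : LinearOrder α) (E A : Finset α) : Prop :=
  A ⊆ E ∧ ∀ x ∈ A, ∀ y ∈ E, w.le y x → y ∈ A

/-- The ordered complex `(w,Γ)` with vertex set `V` is shifted: exchanging a vertex of a
face for a `w`-smaller vertex of `V` again yields a face. -/
def IsShiftedOrd (w : LinearOrder α) (V : Finset α) (Γ : Set (Finset α)) : Prop :=
  ∀ γ ∈ Γ, ∀ e ∈ γ, ∀ f ∈ V, w.lt f e → f ∉ γ → insert f (γ.erase e) ∈ Γ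

namespace IsShiftedOrd

variable {w : LinearOrder α} {V : Finset α} {Γ : Set (Finset α)}

theorem mono (hsh : IsShiftedOrd w V Γ) {V' : Finset α} (hV : V' ⊆ V) :
    IsShiftedOrd w V' Γ :=
  fun γ hγ e he f hf => hsh γ hγ e he f (hV hf)

theorem restrictC (hsh : IsShiftedOrd w V Γ) {S : Finset α} (hS : S ⊆ V) :
    IsShiftedOrd w S (restrictC Γ S) := by
  rintro γ ⟨hγΓ, hγS⟩ e he f hf hlt hfγ
  refine ⟨hsh γ hγΓ e he f (hS hf) hlt hfγ, ?_⟩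
  exact Finset.insert_subset hf ((γ.erase_subset e).trans hγS)

theorem linkC (hsh : IsShiftedOrd w V Γ) (σ : Finset α) :
    IsShiftedOrd w (V \ σ) (linkC Γ σ) := by
  rintro β ⟨hdisj, hβσ⟩ e he f hf hlt hfβ
  obtain ⟨hfV, hfσ⟩ := Finset.mem_sdiff.mp hf
  have heσ : e ∉ σ := Finset.disjoint_left.mp hdisj he
  have hswap := hsh (β ∪ σ) hβσ e (Finset.mem_union_left σ he) f hfV hlt
    (by simp [hfβ, hfσ])
  refine ⟨Finset.disjoint_insert_left.mpr ⟨hfσ, hdisj.mono_left (β.erase_subset e)⟩, ?_⟩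
  rwa [Finset.insert_union, ← Finset.erase_eq_of_notMem heσ, ← Finset.erase_union_distrib]

end IsShiftedOrd

theorem shifted_initial_restriction_contraction_general
    (w : LinearOrder α) (E : Finset α) (Γ : Set (Finset α))
    (hsh : IsShiftedOrd w E Γ)
    (A : Finset α) (hA : IsInitialSeg w E A) :
    IsShiftedOrd w A (restrictC Γ A) ∧
    ∀ φ, IsLexMinFacet w (restrictC Γ A) φ →
      IsShiftedOrd w (E \ A) (linkC Γ φ) :=
  ⟨hsh.restrictC hA.1, fun φ hφ =>
    (hsh.linkC φ).mono (Finset.sdiff_subset_sdiff le_rfl hφ.1.1.2)⟩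

/-- Initial restrictions and initial contractions of a pure shifted ordered complex are
shifted (with respect to the induced orders). -/
theorem shifted_initial_restriction_contraction
    (w : LinearOrder α) (E : Finset α) (Γ : Set (Finset α))
    (hΓ : IsComplexOn E Γ) (hpure : IsPureC Γ) (hsh : IsShiftedOrd w E Γ)
    (A : Finset α) (hA : IsInitialSeg w E A) :
    IsShiftedOrd w A (restrictC Γ A) ∧
    ∀ φ, IsLexMinFacet w (restrictC Γ A) φ →
      IsShiftedOrd w (E \ A) (linkC Γ φ) :=
  shifted_initial_restriction_contraction_general w E Γ hsh A hA
end
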